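/- Let P be a finite poset, k a field, and Q a (not necessarily convex) full subposet of P. If n is a natural number such that every persistence module over P admits an interval resolution of length at most n, then every persistence module over Q admits an interval resolution of length at most n. In particular, the interval resolution global dimension of k[Q] is at most that of k[P]. -/

import Mathlib

open CategoryTheory CategoryTheory.Limits

attribute [local instance] CategoryTheory.Limits.HasFiniteBiproducts.of_hasFiniteProducts

section Posets

variable {P : Type} [PartialOrder P]

/-- Zigzag connectivity of two elements of a subset `S` of a poset: they are linked by a
zigzag of comparable pairs inside `S`. -/
def ZigzagConnIn (S : Set P) (a b : S) : Prop :=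
  Relation.ReflTransGen (fun u v : S => (u : P) ≤ v ∨ (v : P) ≤ u) a b

/-- A subset of a poset is convex if `x ≤ z ≤ y` with `x, y` in the subset implies `z` is. -/
def IsConvex (S : Set P) : Prop :=
  ∀ ⦃x y z : P⦄, x ∈ S → y ∈ S → x ≤ z → z ≤ y → z ∈ S

/-- An interval of a poset: a nonempty, convex, zigzag-connected subset. -/
def IsIntervalSet (S : Set P) : Prop :=
  S.Nonempty ∧ IsConvex S ∧ ∀ a b : S, ZigzagConnIn S a b

end Posets

section IntervalModules

variable (k : Type) [Field k] {P : Type} [PartialOrder P]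

open Classical in
/-- The linear map between the fibers of the interval module. -/
noncomputable def intervalModuleAux (S : Set P) (p q : P) :
    ↥(if p ∈ S then (⊤ : Submodule k k) else ⊥) →ₗ[k]
      ↥(if q ∈ S then (⊤ : Submodule k k) else ⊥) where
  toFun x := ⟨(if p ∈ S ∧ q ∈ S then (1 : k) else 0) * x.1, by
    by_cases hq : q ∈ S
    · rw [if_pos hq]; exact Submodule.mem_top
    · rw [if_neg hq, if_neg (fun h => hq h.2), zero_mul]; exact Submodule.zero_mem _⟩
  map_add' x y := by ext; simp [mul_add]
  map_smul' c x := by ext; simp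

open Classical in
/-- The interval module `k_S` associated to a convex subset `S` of a poset `P`:
it is `k` at points of `S`, `0` elsewhere, with identity structure maps inside `S`. -/
noncomputable def intervalModule (S : Set P) (hS : IsConvex S) : P ⥤ ModuleCat.{0} k where
  obj p := ModuleCat.of k ↥(if p ∈ S then (⊤ : Submodule k k) else ⊥)
  map {p q} _ := ModuleCat.ofHom (intervalModuleAux k S p q)
  map_id p := by
    apply ModuleCat.hom_ext
    apply LinearMap.ext
    rintro ⟨x, hx⟩
    apply Subtype.ext
    show (if p ∈ S ∧ p ∈ S then (1 : k) else 0) * x = x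
    by_cases hp : p ∈ S
    · simp [hp]
    · rw [if_neg hp] at hx
      simp [hp, (Submodule.mem_bot k).mp hx]
  map_comp {p q r} f g := by
    apply ModuleCat.hom_ext
    apply LinearMap.ext
    rintro ⟨x, hx⟩
    apply Subtype.ext
    show (if p ∈ S ∧ r ∈ S then (1 : k) else 0) * x
      = (if q ∈ S ∧ r ∈ S then (1 : k) else 0) * ((if p ∈ S ∧ q ∈ S then (1 : k) else 0) * x)
    by_cases hp : p ∈ S
    · by_cases hr : r ∈ S
      · have hq : q ∈ S := hS hp hr (leOfHom f) (leOfHom g)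
        simp [hp, hq, hr]
      · simp [hr]
    · rw [if_neg hp] at hx
      simp [(Submodule.mem_bot k).mp hx]

/-- A persistence module is an interval module if it is isomorphic to `k_S` for some
interval `S`. -/
def IsIntervalModule (M : P ⥤ ModuleCat.{0} k) : Prop :=
  ∃ (S : Set P) (hS : IsIntervalSet S), Nonempty (M ≅ intervalModule k S hS.2.1)

/-- A persistence module is interval-decomposable if it is isomorphic to a finite direct sum
of interval modules. -/
def IsIntervalDecomposable (M : P ⥤ ModuleCat.{0} k) : Prop :=
  ∃ (n : ℕ) (J : Fin n → (P ⥤ ModuleCat.{0} k)),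
    (∀ i, IsIntervalModule k (J i)) ∧ Nonempty (M ≅ ⨁ J)

/-- The support of a persistence module. -/
def moduleSupport (M : P ⥤ ModuleCat.{0} k) : Set P := {p : P | ¬ IsZero (M.obj p)}

/-- A persistence module valued in finite-dimensional vector spaces. -/
def PointwiseFinite (M : P ⥤ ModuleCat.{0} k) : Prop :=
  ∀ p : P, FiniteDimensional k (M.obj p)

end IntervalModules

section Approximations

variable {C : Type*} [Category C]

/-- `f : X ⟶ M` is a right `𝒳`-approximation of `M` if `X ∈ 𝒳` and every morphism
from an object of `𝒳` to `M` factors through `f`. -/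
def IsRightApproximation (𝒳 : C → Prop) {X M : C} (f : X ⟶ M) : Prop :=
  𝒳 X ∧ ∀ ⦃Y : C⦄ (g : Y ⟶ M), 𝒳 Y → ∃ h : Y ⟶ X, h ≫ f = g

/-- `f : X ⟶ M` is right minimal if every endomorphism `g` of `X` with `f ∘ g = f`
is an isomorphism. -/
def IsRightMinimal {X M : C} (f : X ⟶ M) : Prop :=
  ∀ g : X ⟶ X, g ≫ f = f → IsIso g

end Approximations

/-- An interval cover: a right minimal approximation by interval-decomposable modules. -/
def IsIntervalCover (k : Type) [Field k] {P : Type} [PartialOrder P]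
    {X M : P ⥤ ModuleCat.{0} k} (f : X ⟶ M) : Prop :=
  IsRightApproximation (IsIntervalDecomposable k) f ∧ IsRightMinimal f

section Resolutions

variable {C : Type*} [Category C] [Limits.HasZeroMorphisms C]

/-- `M` admits a resolution `0 ⟶ J_n ⟶ ⋯ ⟶ J_1 ⟶ J_0 ⟶ M ⟶ 0` of length `n` by objects
of `𝒳`: an exact sequence in which every `J_i` lies in `𝒳`.  (The data is encoded by an
`ℕ`-indexed complex which vanishes in degrees `> n` and is exact everywhere.) -/
def HasResolutionOfLength (𝒳 : C → Prop) (n : ℕ) (M : C) : Prop :=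
  ∃ (J : ℕ → C) (d : ∀ i, J (i + 1) ⟶ J i) (f : J 0 ⟶ M) (w0 : d 0 ≫ f = 0)
    (w : ∀ i, d (i + 1) ≫ d i = 0),
    (∀ i, i ≤ n → 𝒳 (J i)) ∧ (∀ i, n < i → IsZero (J i)) ∧
    Epi f ∧ (ShortComplex.mk (d 0) f w0).Exact ∧
    ∀ i, (ShortComplex.mk (d (i + 1)) (d i) (w i)).Exact

end Resolutions

/-!
Extend a module `N` over `Q` to `P` by the right Kan extension `E`, whose value at `p` is the
space of compatible families of elements of `N` over `{q ∈ Q | p ≤ q}`; it is pointwise finite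
since `P` is finite, and restricts back to `N`. Restriction along `Q ⊆ P` is exact, so it carries
an interval resolution of `E` to a resolution of `N` of the same length. Its terms are again
interval-decomposable: an interval `I` of `P` meets `Q` in a convex subset of `Q`, and the
interval module of a convex set is the direct sum of the interval modules of its zigzag
components.
-/


section ZigzagComponents

variable {X : Type} [PartialOrder X] (S : Set X)

abbrev ZigzagClass : Type := Quot fun u v : S => (u : X) ≤ v

def zigzagComponent (c : ZigzagClass S) : Set X :=
  {x | ∃ hx : x ∈ S, Quot.mk _ ⟨x, hx⟩ = c}

variable {S}

theorem zigzagComponent_subset (c : ZigzagClass S) : zigzagComponent S c ⊆ S :=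
  fun _ hx => hx.1

theorem mem_zigzagComponent_mk {x : X} (hx : x ∈ S) :
    x ∈ zigzagComponent S (Quot.mk _ ⟨x, hx⟩) :=
  ⟨hx, rfl⟩

theorem eq_of_mem_zigzagComponent {x : X} {c c' : ZigzagClass S} (hc : x ∈ zigzagComponent S c)
    (hc' : x ∈ zigzagComponent S c') : c = c' := by
  obtain ⟨_, rfl⟩ := hc
  obtain ⟨_, rfl⟩ := hc'
  rfl

theorem mem_zigzagComponent_of_comparable {x y : X} {c : ZigzagClass S}
    (hx : x ∈ zigzagComponent S c) (hy : y ∈ S) (hxy : x ≤ y ∨ y ≤ x) :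
    y ∈ zigzagComponent S c := by
  obtain ⟨hx, rfl⟩ := hx
  refine ⟨hy, ?_⟩
  rcases hxy with hxy | hyx
  · exact (Quot.sound (show (⟨x, hx⟩ : S) ≤ ⟨y, hy⟩ from hxy)).symm
  · exact Quot.sound (show (⟨y, hy⟩ : S) ≤ ⟨x, hx⟩ from hyx)

theorem zigzagConnIn_of_quot_mk_eq {a b : S}
    (h : Quot.mk (fun u v : S => (u : X) ≤ v) a = Quot.mk _ b) : ZigzagConnIn S a b := by
  have : ZigzagConnIn S = Relation.ReflTransGen (Relation.SymmGen fun u v : S => u ≤ v) := rfl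
  rw [this, Relation.EqvGen.reflTransGen_symmGen]
  exact Quot.eqvGen_exact h

theorem ZigzagConnIn.zigzagComponent {c : ZigzagClass S} {a b : S} (hab : ZigzagConnIn S a b)
    (ha : (a : X) ∈ zigzagComponent S c) :
    ∃ hb : (b : X) ∈ zigzagComponent S c, ZigzagConnIn (zigzagComponent S c) ⟨a, ha⟩ ⟨b, hb⟩ := by
  induction hab with
  | refl => exact ⟨ha, .refl⟩
  | @tail u v _ huv ih =>
    obtain ⟨hu, hau⟩ := ih
    exact ⟨mem_zigzagComponent_of_comparable hu v.2 huv, hau.tail huv⟩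

theorem isConvex_zigzagComponent (hS : IsConvex S) (c : ZigzagClass S) :
    IsConvex (zigzagComponent S c) := fun _ _ _ hx hy hxz hzy =>
  mem_zigzagComponent_of_comparable hx
    (hS (zigzagComponent_subset c hx) (zigzagComponent_subset c hy) hxz hzy) (.inl hxz)

theorem isIntervalSet_zigzagComponent (hS : IsConvex S) (c : ZigzagClass S) :
    IsIntervalSet (zigzagComponent S c) := by
  refine ⟨?_, isConvex_zigzagComponent hS c, ?_⟩
  · obtain ⟨⟨x, hx⟩, rfl⟩ := Quot.exists_rep c
    exact ⟨x, mem_zigzagComponent_mk hx⟩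
  · rintro ⟨a, ha⟩ ⟨b, hb⟩
    obtain ⟨haS, hac⟩ := ha
    obtain ⟨hbS, rfl⟩ := hb
    exact ((zigzagConnIn_of_quot_mk_eq hac).zigzagComponent ⟨haS, hac⟩).2

end ZigzagComponents

section Indicator

/- Decidability comes from `Classical`, as in `intervalModule`, so that
`(intervalModule k S hS).obj p` is definitionally `indicatorModule k (p ∈ S)`
and its structure maps are `indicatorHom`s. -/
open Classical

variable (k : Type) [Field k]

noncomputable def indicatorModule (A : Prop) : ModuleCat.{0} k :=
  ModuleCat.of k ↥(if A then (⊤ : Submodule k k) else ⊥)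

noncomputable def indicatorHom (A B : Prop) : indicatorModule k A ⟶ indicatorModule k B :=
  ModuleCat.ofHom
    { toFun x := ⟨(if A ∧ B then (1 : k) else 0) * x.1, by
        by_cases hB : B
        · rw [if_pos hB]; exact Submodule.mem_top
        · rw [if_neg hB, if_neg (fun h => hB h.2), zero_mul]; exact Submodule.zero_mem _⟩
      map_add' _ _ := Subtype.ext (mul_add _ _ _)
      map_smul' _ _ := Subtype.ext (mul_left_comm _ _ _) }

lemma isZero_indicatorModule {A : Prop} (hA : ¬A) : IsZero (indicatorModule k A) := by
  rw [ModuleCat.isZero_iff_subsingleton]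
  unfold indicatorModule
  rw [if_neg hA]
  infer_instance

lemma indicatorHom_comp {A B C : Prop} (h : A → C → B) :
    indicatorHom k A B ≫ indicatorHom k B C = indicatorHom k A C := by
  ext x
  apply Subtype.ext
  show (if B ∧ C then (1 : k) else 0) * ((if A ∧ B then (1 : k) else 0) * x.1)
      = (if A ∧ C then (1 : k) else 0) * x.1
  by_cases hA : A <;> by_cases hC : C <;> simp [hA, hC, h]

lemma indicatorHom_self (A : Prop) : indicatorHom k A A = 𝟙 _ := by
  by_cases hA : A
  · ext x
    apply Subtype.ext
    show (if A ∧ A then (1 : k) else 0) * x.1 = x.1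
    simp [hA]
  · exact (isZero_indicatorModule k hA).eq_of_src _ _

lemma indicatorHom_eq_zero {A B : Prop} (h : ¬(A ∧ B)) : indicatorHom k A B = 0 := by
  ext x
  apply Subtype.ext
  show (if A ∧ B then (1 : k) else 0) * x.1 = 0
  simp [h]

end Indicator

section Decomposability

variable {k : Type} [Field k] {X : Type} [PartialOrder X]

theorem IsIntervalDecomposable.of_iso {M M' : X ⥤ ModuleCat.{0} k}
    (hM : IsIntervalDecomposable k M) (e : M' ≅ M) : IsIntervalDecomposable k M' :=
  let ⟨n, J, hJ, ⟨e'⟩⟩ := hM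
  ⟨n, J, hJ, ⟨e ≪≫ e'⟩⟩

theorem IsIntervalDecomposable.of_iso_biproduct_intervalModules {ι : Type} [Fintype ι]
    {M : X ⥤ ModuleCat.{0} k} (G : ι → X ⥤ ModuleCat.{0} k) (hG : ∀ i, IsIntervalModule k (G i))
    (e : M ≅ ⨁ G) : IsIntervalDecomposable k M :=
  ⟨Fintype.card ι, fun i => G ((Fintype.equivFin ι).symm i), fun _ => hG _,
    ⟨e ≪≫ biproduct.whiskerEquiv (Fintype.equivFin ι)
      fun _ => eqToIso (congrArg G (Equiv.symm_apply_apply _ _))⟩⟩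

theorem IsIntervalDecomposable.of_iso_biproduct {ι : Type} [Finite ι]
    {M : X ⥤ ModuleCat.{0} k} (G : ι → X ⥤ ModuleCat.{0} k)
    (hG : ∀ i, IsIntervalDecomposable k (G i)) (e : M ≅ ⨁ G) : IsIntervalDecomposable k M := by
  choose n K hK eK using hG
  have := Fintype.ofFinite ι
  exact of_iso_biproduct_intervalModules _ (fun p : Σ i, Fin (n i) => hK p.1 p.2)
    (e ≪≫ biproduct.mapIso (fun i => (eK i).some) ≪≫ biproductBiproductIso _ _)

end Decomposability

section IntervalModuleDecomposition

variable (k : Type) [Field k] {X : Type} [PartialOrder X]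

/-- The morphism that is the identity at the points of `S ∩ T`; `h` is its naturality. -/
noncomputable def intervalModuleHom {S T : Set X} (hS : IsConvex S) (hT : IsConvex T)
    (h : ∀ ⦃p q⦄, p ≤ q → p ∈ S → q ∈ T → q ∈ S ∧ p ∈ T) :
    intervalModule k S hS ⟶ intervalModule k T hT where
  app p := indicatorHom k (p ∈ S) (p ∈ T)
  naturality p q f := by
    change indicatorHom k (p ∈ S) (q ∈ S) ≫ indicatorHom k (q ∈ S) (q ∈ T)
      = indicatorHom k (p ∈ S) (p ∈ T) ≫ indicatorHom k (p ∈ T) (q ∈ T)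
    rw [indicatorHom_comp k fun hp hq => (h (leOfHom f) hp hq).1,
      indicatorHom_comp k fun hp hq => (h (leOfHom f) hp hq).2]

variable {k}

theorem intervalModuleHom_comp {S T U : Set X} {hS : IsConvex S} {hT : IsConvex T}
    {hU : IsConvex U} {hST hTU} (hSU : ∀ ⦃p q⦄, p ≤ q → p ∈ S → q ∈ U → q ∈ S ∧ p ∈ U)
    (hSTU : ∀ p, p ∈ S → p ∈ U → p ∈ T) :
    intervalModuleHom k hS hT hST ≫ intervalModuleHom k hT hU hTU
      = intervalModuleHom k hS hU hSU := by
  ext p : 2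
  exact indicatorHom_comp k (hSTU p)

theorem intervalModuleHom_self {S : Set X} {hS : IsConvex S} {h} :
    intervalModuleHom k hS hS h = 𝟙 _ := by
  ext p : 2
  exact indicatorHom_self k _

theorem intervalModuleHom_eq_zero {S T : Set X} {hS : IsConvex S} {hT : IsConvex T} {h}
    (hST : Disjoint S T) : intervalModuleHom k hS hT h = 0 := by
  ext p : 2
  exact indicatorHom_eq_zero k fun hp => hST.notMem_of_mem_left hp.1 hp.2

variable (k) in
noncomputable def intervalModuleIsoBiproductZigzagComponents [Finite X] {S : Set X}
    (hS : IsConvex S) :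
    intervalModule k S hS ≅ ⨁ fun c : ZigzagClass S =>
      intervalModule k (zigzagComponent S c) (isConvex_zigzagComponent hS c) where
  hom := biproduct.lift fun c => intervalModuleHom k _ _ fun _ _ hpq hp hq =>
    ⟨zigzagComponent_subset c hq, mem_zigzagComponent_of_comparable hq hp (.inr hpq)⟩
  inv := biproduct.desc fun c => intervalModuleHom k _ _ fun _ _ hpq hp hq =>
    ⟨mem_zigzagComponent_of_comparable hp hq (.inl hpq), zigzagComponent_subset c hp⟩
  hom_inv_id := by
    have := Fintype.ofFinite (ZigzagClass S)
    rw [biproduct.lift_desc]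
    ext p : 2
    rw [NatTrans.app_sum]
    change ∑ c, indicatorHom k (p ∈ S) (p ∈ zigzagComponent S c) ≫
      indicatorHom k (p ∈ zigzagComponent S c) (p ∈ S) = 𝟙 (indicatorModule k (p ∈ S))
    by_cases hp : p ∈ S
    · rw [Finset.sum_eq_single (Quot.mk _ ⟨p, hp⟩)]
      · rw [indicatorHom_comp k fun _ _ => mem_zigzagComponent_mk hp, indicatorHom_self]
      · intro c _ hc
        rw [indicatorHom_eq_zero k, zero_comp]
        exact fun hpc => hc (eq_of_mem_zigzagComponent hpc.2 (mem_zigzagComponent_mk hp))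
      · exact fun h => absurd (Finset.mem_univ _) h
    · exact (isZero_indicatorModule k hp).eq_of_src _ _
  inv_hom_id := by
    refine biproduct.hom_ext' _ _ fun c => biproduct.hom_ext _ _ fun c' => ?_
    simp only [biproduct.ι_desc_assoc, Category.assoc, biproduct.lift_π, Category.id_comp]
    have hsub : ∀ p, p ∈ zigzagComponent S c → p ∈ zigzagComponent S c' → p ∈ S :=
      fun _ hp _ => zigzagComponent_subset c hp
    by_cases hcc' : c = c'
    · subst hcc'
      rw [biproduct.ι_π_self, intervalModuleHom_comp (fun _ _ _ hp hq => ⟨hq, hp⟩) hsub,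
        intervalModuleHom_self]
    · rw [biproduct.ι_π_ne _ hcc', intervalModuleHom_comp (fun _ _ hpq hp hq => absurd
          (eq_of_mem_zigzagComponent (mem_zigzagComponent_of_comparable hp
            (zigzagComponent_subset c' hq) (.inl hpq)) hq) hcc') hsub,
        intervalModuleHom_eq_zero (Set.disjoint_left.2 fun _ hpc hpc' =>
          hcc' (eq_of_mem_zigzagComponent hpc hpc'))]

theorem isIntervalDecomposable_intervalModule [Finite X] {S : Set X} (hS : IsConvex S) :
    IsIntervalDecomposable k (intervalModule k S hS) :=
  have := Fintype.ofFinite (ZigzagClass S)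
  .of_iso_biproduct_intervalModules _
    (fun c => ⟨_, isIntervalSet_zigzagComponent hS c, ⟨Iso.refl _⟩⟩)
    (intervalModuleIsoBiproductZigzagComponents k hS)

theorem IsConvex.preimage {Y : Type} [PartialOrder Y] {S : Set X} (hS : IsConvex S)
    (F : Y ⥤ X) : IsConvex {y | F.obj y ∈ S} :=
  fun _ _ _ hx hy hxz hzy => hS hx hy (F.monotone hxz) (F.monotone hzy)

theorem IsIntervalDecomposable.precomp {Y : Type} [PartialOrder Y] [Finite Y]
    {M : X ⥤ ModuleCat.{0} k} (hM : IsIntervalDecomposable k M) (F : Y ⥤ X) :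
    IsIntervalDecomposable k (F ⋙ M) := by
  obtain ⟨n, J, hJ, ⟨e⟩⟩ := hM
  let R := (Functor.whiskeringLeft Y X (ModuleCat.{0} k)).obj F
  refine of_iso_biproduct (fun i => F ⋙ J i) (fun i => ?_) (R.mapIso e ≪≫ R.mapBiproduct J)
  obtain ⟨S, hS, ⟨eS⟩⟩ := hJ i
  exact (isIntervalDecomposable_intervalModule (hS.2.1.preimage F)).of_iso (F.isoWhiskerLeft eS)

end IntervalModuleDecomposition

section ResolutionTransport

variable {C D : Type*} [Category C] [Category D] [HasZeroMorphisms C] [HasZeroMorphisms D]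
  {𝒳 : C → Prop} {n : ℕ}

theorem HasResolutionOfLength.of_iso {M M' : C} (hM : HasResolutionOfLength 𝒳 n M) (e : M ≅ M') :
    HasResolutionOfLength 𝒳 n M' := by
  obtain ⟨J, d, f, w0, w, hJ, hzero, hf, hexact0, hexact⟩ := hM
  refine ⟨J, d, f ≫ e.hom, by rw [reassoc_of% w0, zero_comp], w, hJ, hzero, epi_comp _ _,
    ShortComplex.exact_of_iso ?_ hexact0, hexact⟩
  exact ShortComplex.isoMk (Iso.refl _) (Iso.refl _) e (by simp) (by simp)

theorem HasResolutionOfLength.map {𝒴 : D → Prop} (F : C ⥤ D) [F.PreservesZeroMorphisms]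
    [F.PreservesHomology] [F.PreservesEpimorphisms] (hF : ∀ X, 𝒳 X → 𝒴 (F.obj X)) {M : C}
    (hM : HasResolutionOfLength 𝒳 n M) : HasResolutionOfLength 𝒴 n (F.obj M) := by
  obtain ⟨J, d, f, w0, w, hJ, hzero, hf, hexact0, hexact⟩ := hM
  exact ⟨fun i => F.obj (J i), fun i => F.map (d i), F.map f, by rw [← F.map_comp, w0, F.map_zero],
    fun i => by rw [← F.map_comp, w i, F.map_zero], fun i hi => hF _ (hJ i hi),
    fun i hi => F.map_isZero (hzero i hi), F.map_epi f, hexact0.map F, fun i => (hexact i).map F⟩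

end ResolutionTransport

section Extension

variable (k : Type) [Field k] {P : Type} [PartialOrder P] (Q : Set P)

def compatibleFamilies (N : Q ⥤ ModuleCat.{0} k) (p : P) :
    Submodule k (∀ q : {q : Q // p ≤ q}, N.obj q.1) where
  carrier := {s | ∀ (q q' : {q : Q // p ≤ q}) (h : q.1 ≤ q'.1), N.map (homOfLE h) (s q) = s q'}
  add_mem' ha hb q q' h := by simp only [Pi.add_apply, map_add, ha q q' h, hb q q' h]
  zero_mem' q q' h := by simp
  smul_mem' c _ ha q q' h := by simp only [Pi.smul_apply, map_smul, ha q q' h]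

noncomputable def rightKanExtensionOfSubposet (N : Q ⥤ ModuleCat.{0} k) :
    P ⥤ ModuleCat.{0} k where
  obj p := ModuleCat.of k (compatibleFamilies k Q N p)
  map {p p'} f := ModuleCat.ofHom
    { toFun s := ⟨fun q => s.1 ⟨q.1, (leOfHom f).trans q.2⟩,
        fun q q' h => s.2 ⟨q.1, (leOfHom f).trans q.2⟩ ⟨q'.1, (leOfHom f).trans q'.2⟩ h⟩
      map_add' _ _ := rfl
      map_smul' _ _ := rfl }

theorem pointwiseFinite_rightKanExtensionOfSubposet [Finite P] {N : Q ⥤ ModuleCat.{0} k}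
    (hN : PointwiseFinite k N) : PointwiseFinite k (rightKanExtensionOfSubposet k Q N) :=
  fun p =>
    have := fun q : {q : Q // p ≤ q} => hN q.1
    inferInstanceAs (FiniteDimensional k (compatibleFamilies k Q N p))

noncomputable def rightKanExtensionOfSubposetRestrictIso (N : Q ⥤ ModuleCat.{0} k) :
    (Subtype.mono_coe (· ∈ Q)).functor ⋙ rightKanExtensionOfSubposet k Q N ≅ N :=
  NatIso.ofComponents
    (fun q => LinearEquiv.toModuleIso
      { toFun s := s.1 ⟨q, le_rfl⟩
        map_add' _ _ := rfl
        map_smul' _ _ := rfl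
        invFun x := ⟨fun r => N.map (homOfLE r.2) x, fun r r' h => by
          rw [← ModuleCat.comp_apply, ← N.map_comp]
          rfl⟩
        left_inv s := Subtype.ext (funext fun r => s.2 ⟨q, le_rfl⟩ r r.2)
        right_inv x := by
          change N.map (𝟙 q) x = x
          rw [N.map_id]
          rfl })
    fun f => ModuleCat.hom_ext (LinearMap.ext fun s => (s.2 ⟨_, le_rfl⟩ ⟨_, leOfHom f⟩ _).symm)

end Extension

theorem intervalResolution_monotone_fullSubposet
    (k : Type) [Field k] (P : Type) [PartialOrder P] [Finite P] (Q : Set P) (n : ℕ)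
    (h : ∀ M : P ⥤ ModuleCat.{0} k, PointwiseFinite k M →
      ∃ m ≤ n, HasResolutionOfLength (IsIntervalDecomposable k) m M) :
    ∀ N : ↥Q ⥤ ModuleCat.{0} k, PointwiseFinite k N →
      ∃ m ≤ n, HasResolutionOfLength (IsIntervalDecomposable k) m N := by
  intro N hN
  obtain ⟨m, hmn, hE⟩ :=
    h (rightKanExtensionOfSubposet k Q N) (pointwiseFinite_rightKanExtensionOfSubposet k Q hN)
  let ι : ↥Q ⥤ P := (Subtype.mono_coe (· ∈ Q)).functor
  have hrestrict := hE.map ((Functor.whiskeringLeft _ _ _).obj ι) fun _ hJ => hJ.precomp ι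
  exact ⟨m, hmn, hrestrict.of_iso (rightKanExtensionOfSubposetRestrictIso k Q N)⟩
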